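/- For every positive integer p, det_{0≤i,j<p}( (−1)^i H_{i+j}(0) ) = 2^{C(p,2)} Π_{j=0}^{p−1} j!, where C(p,2) = p(p−1)/2. -/
import Mathlib


open scoped BigOperators

/-- The `k`-th physicists' Hermite polynomial, via
`H_k(z)/k! = Σ_m ((-1)^(k-m)/(k-m)!) (2z)^(2m-k)/(2m-k)!` (terms with negative
factorial arguments being zero). -/
noncomputable def hermiteH (k : ℕ) (z : ℝ) : ℝ :=
  (k.factorial : ℝ) * ∑ m ∈ Finset.range (k+1),
    if k ≤ 2*m then ((-1:ℝ)^(k-m) / (k-m).factorial) * ((2*z)^(2*m-k) / (2*m-k).factorial)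
    else 0

noncomputable def hh (n : ℕ) : ℝ :=
  if Even n then (-1 : ℝ)^(n/2) * n.factorial / (n/2).factorial else 0

lemma hh_zero : hh 0 = 1 := by simp [hh]

lemma hh_odd {n : ℕ} (hn : ¬ Even n) : hh n = 0 := by simp [hh, hn]

lemma hh_step (n : ℕ) : hh (n+2) = -2 * (n+1) * hh n := by
  by_cases hn : Even n
  · obtain ⟨m, rfl⟩ := hn
    have hn' : Even (m + m) := ⟨m, rfl⟩
    have h1 : Even (m + m + 2) := ⟨m+1, by ring⟩
    simp only [hh, if_pos hn', if_pos h1]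
    have e1 : (m + m + 2)/2 = m + 1 := by omega
    have e2 : (m + m)/2 = m := by omega
    rw [e1, e2]
    have e3 : (m + m + 2) = (m+m) + 2 := by ring
    rw [e3]
    rw [Nat.factorial_succ, Nat.factorial_succ, Nat.factorial_succ]
    push_cast
    have hf : ((m.factorial : ℝ)) ≠ 0 := by positivity
    field_simp
    ring
  · have h1 : ¬ Even (n+2) := by
      simpa [Nat.even_add] using hn
    rw [hh_odd hn, hh_odd h1]; ring

lemma hh_one : hh 1 = 0 := hh_odd (by decide)

lemma hh_succ (a : ℕ) : hh (a+1) = -2 * a * hh (a-1) := by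
  cases a with
  | zero => simp [hh_one]
  | succ c => simpa using hh_step c

noncomputable def trm (i j k : ℕ) : ℝ :=
  (i.choose k) * (j.choose k) * (-2)^k * k.factorial * hh (i-k) * hh (j-k)

noncomputable def FF (i j : ℕ) : ℝ := ∑ k ∈ Finset.range (i+1), trm i j k

-- the four summand families
noncomputable def X (i j k : ℕ) : ℝ :=
  (i.choose k) * (j.choose k) * (-2)^k * k.factorial * hh (i+1-k) * hh (j-k)
noncomputable def Y (i j k : ℕ) : ℝ :=
  (i.choose k) * (j.choose (k+1)) * (-2)^(k+1) * (k+1).factorial * hh (i-k) * hh (j-(k+1))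
noncomputable def X' (i j k : ℕ) : ℝ :=
  (i.choose k) * (j.choose k) * (-2)^k * k.factorial * hh (i-k) * hh (j+1-k)
noncomputable def Y' (i j k : ℕ) : ℝ :=
  (i.choose (k+1)) * (j.choose k) * (-2)^(k+1) * (k+1).factorial * hh (i-(k+1)) * hh (j-k)

lemma termwise (i j k : ℕ) : X i j k + Y i j k = X' i j k + Y' i j k := by
  by_cases hki : k ≤ i
  · by_cases hkj : k ≤ j
    · -- main case
      set a := i - k with ha
      set b := j - k with hb
      have e1 : i + 1 - k = a + 1 := by omega
      have e2 : j + 1 - k = b + 1 := by omega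
      have e3 : i - (k+1) = a - 1 := by omega
      have e4 : j - (k+1) = b - 1 := by omega
      have c1 : (i.choose (k+1) : ℝ) * (k+1) = (i.choose k) * a := by
        have := Nat.choose_succ_right_eq i k
        exact_mod_cast congrArg (Nat.cast : ℕ → ℝ) this
      have c2 : (j.choose (k+1) : ℝ) * (k+1) = (j.choose k) * b := by
        have := Nat.choose_succ_right_eq j k
        exact_mod_cast congrArg (Nat.cast : ℕ → ℝ) this
      simp only [X, Y, X', Y', e1, e2, e3, e4, hh_succ a, hh_succ b,
        Nat.factorial_succ]
      push_cast
      linear_combination ((-2:ℝ)^(k+1) * k.factorial * hh (i-k) * hh (b-1) * (i.choose k)) * c2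
        - ((-2:ℝ)^(k+1) * k.factorial * hh (a-1) * hh (j-k) * (j.choose k)) * c1
    · have h1 : j.choose k = 0 := Nat.choose_eq_zero_of_lt (by omega)
      have h2 : j.choose (k+1) = 0 := Nat.choose_eq_zero_of_lt (by omega)
      simp [X, Y, X', Y', h1, h2]
  · have h1 : i.choose k = 0 := Nat.choose_eq_zero_of_lt (by omega)
    have h2 : i.choose (k+1) = 0 := Nat.choose_eq_zero_of_lt (by omega)
    simp [X, Y, X', Y', h1, h2]

lemma sum_trm_left (i j : ℕ) :
    FF (i+1) j = (∑ k ∈ Finset.range (i+1), X i j k) + ∑ k ∈ Finset.range (i+1), Y i j k := by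
  have step1 : FF (i+1) j
      = (∑ k ∈ Finset.range (i+1), trm (i+1) j (k+1)) + trm (i+1) j 0 :=
    Finset.sum_range_succ' _ _
  have step2 : ∀ k, trm (i+1) j (k+1) = X i j (k+1) + Y i j k := by
    intro k
    simp only [trm, X, Y, Nat.choose_succ_succ i k]
    have e : i + 1 - (k+1) = i - k := by omega
    rw [e]
    push_cast
    ring
  have step3 : trm (i+1) j 0 = X i j 0 := by
    simp only [trm, X]
    norm_num
  rw [step1, step3]
  simp only [step2]
  rw [Finset.sum_add_distrib]
  have step4 : (∑ k ∈ Finset.range (i+1), X i j (k+1)) + X i j 0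
      = ∑ k ∈ Finset.range (i+2), X i j k := (Finset.sum_range_succ' _ _).symm
  have step5 : ∑ k ∈ Finset.range (i+2), X i j k = ∑ k ∈ Finset.range (i+1), X i j k := by
    rw [Finset.sum_range_succ]
    simp [X, Nat.choose_eq_zero_of_lt (Nat.lt_succ_self i)]
  linarith [step4, step5]

lemma sum_trm_right (i j : ℕ) :
    FF i (j+1) = (∑ k ∈ Finset.range (i+1), X' i j k) + ∑ k ∈ Finset.range (i+1), Y' i j k := by
  have step1 : FF i (j+1)
      = (∑ k ∈ Finset.range i, trm i (j+1) (k+1)) + trm i (j+1) 0 :=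
    Finset.sum_range_succ' _ _
  have step2 : ∀ k, trm i (j+1) (k+1) = X' i j (k+1) + Y' i j k := by
    intro k
    simp only [trm, X', Y', Nat.choose_succ_succ j k]
    have e : j + 1 - (k+1) = j - k := by omega
    rw [e]
    push_cast
    ring
  have step3 : trm i (j+1) 0 = X' i j 0 := by
    simp only [trm, X']
    norm_num
  rw [step1, step3]
  simp only [step2]
  rw [Finset.sum_add_distrib]
  have step4 : (∑ k ∈ Finset.range i, X' i j (k+1)) + X' i j 0
      = ∑ k ∈ Finset.range (i+1), X' i j k := (Finset.sum_range_succ' _ _).symm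
  have step5 : ∑ k ∈ Finset.range (i+1), Y' i j k = ∑ k ∈ Finset.range i, Y' i j k := by
    rw [Finset.sum_range_succ]
    simp [Y', Nat.choose_eq_zero_of_lt (Nat.lt_succ_self i)]
  linarith [step4, step5]

lemma FF_swap (i j : ℕ) : FF (i+1) j = FF i (j+1) := by
  rw [sum_trm_left, sum_trm_right, ← Finset.sum_add_distrib, ← Finset.sum_add_distrib]
  exact Finset.sum_congr rfl fun k _ => termwise i j k

lemma FF_eq (i j : ℕ) : FF i j = hh (i+j) := by
  induction i generalizing j with
  | zero => simp [FF, trm, hh_zero]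
  | succ n ih =>
      rw [FF_swap, ih (j+1)]
      congr 1
      omega

lemma hermiteH_zero (n : ℕ) : hermiteH n 0 = hh n := by
  by_cases hn : Even n
  · obtain ⟨c, hc⟩ := hn
    have hcn : n = 2 * c := by omega
    have hmem : c ∈ Finset.range (n+1) := Finset.mem_range.mpr (by omega)
    have hsum : (∑ m ∈ Finset.range (n+1),
        if n ≤ 2*m then ((-1:ℝ)^(n-m) / (n-m).factorial) * ((2*(0:ℝ))^(2*m-n) / (2*m-n).factorial)
        else 0) = (-1:ℝ)^c / c.factorial := by
      rw [Finset.sum_eq_single_of_mem c hmem]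
      · have h1 : n ≤ 2 * c := by omega
        have h2 : 2 * c - n = 0 := by omega
        have h3 : n - c = c := by omega
        rw [if_pos h1, h2, h3]
        norm_num
      · intro m _ hm
        by_cases h1 : n ≤ 2 * m
        · have h2 : 2 * m - n ≠ 0 := by omega
          rw [if_pos h1]
          rw [mul_zero, zero_pow h2]
          ring
        · exact if_neg h1
    rw [hermiteH, hsum, hh, if_pos ⟨c, hc⟩]
    have : n / 2 = c := by omega
    rw [this]
    ring
  · have hsum : (∑ m ∈ Finset.range (n+1),
        if n ≤ 2*m then ((-1:ℝ)^(n-m) / (n-m).factorial) * ((2*(0:ℝ))^(2*m-n) / (2*m-n).factorial)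
        else 0) = 0 := by
      apply Finset.sum_eq_zero
      intro m _
      by_cases h1 : n ≤ 2 * m
      · have h2 : 2 * m - n ≠ 0 := by
          intro h
          exact hn ⟨m, by omega⟩
        rw [if_pos h1, mul_zero, zero_pow h2]
        ring
      · exact if_neg h1
    rw [hermiteH, hsum, hh_odd hn]
    ring

lemma sum_trm_range (p i j : ℕ) (hi : i < p) :
    ∑ k ∈ Finset.range p, trm i j k = hh (i+j) := by
  rw [← FF_eq i j, FF]
  apply (Finset.sum_subset _ _).symm
  · intro k hk
    simp only [Finset.mem_range] at *
    omega
  · intro k _ hk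
    simp only [Finset.mem_range, not_lt] at hk
    have : i.choose k = 0 := Nat.choose_eq_zero_of_lt (by omega)
    simp [trm, this]

/-- `det_{0≤i,j<p}( (-1)^i H_{i+j}(0) ) = 2^{C(p,2)} Π_{j<p} j!`. -/
theorem stmt12 (p : ℕ) (hp : 0 < p) :
    Matrix.det (Matrix.of fun i j : Fin p =>
        (-1:ℝ)^(i : ℕ) * hermiteH ((i : ℕ)+(j : ℕ)) 0) =
      2^(p.choose 2) * ∏ j ∈ Finset.range p, (j.factorial : ℝ) := by
  set B : Matrix (Fin p) (Fin p) ℝ :=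
    Matrix.of (fun i k : Fin p => (-1:ℝ)^(i:ℕ) * ((i:ℕ).choose (k:ℕ)) * hh ((i:ℕ) - (k:ℕ))) with hB
  set C : Matrix (Fin p) (Fin p) ℝ :=
    Matrix.of (fun k j : Fin p => (-2:ℝ)^(k:ℕ) * ((k:ℕ).factorial : ℝ) * ((j:ℕ).choose (k:ℕ)) * hh ((j:ℕ) - (k:ℕ))) with hC
  have hmul : (Matrix.of fun i j : Fin p =>
      (-1:ℝ)^(i : ℕ) * hermiteH ((i : ℕ)+(j : ℕ)) 0) = B * C := by
    ext i j
    rw [Matrix.mul_apply]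
    simp only [hB, hC, Matrix.of_apply]
    have : ∑ k : Fin p, (-1:ℝ)^(i:ℕ) * ((i:ℕ).choose (k:ℕ)) * hh ((i:ℕ) - (k:ℕ)) *
        ((-2:ℝ)^(k:ℕ) * ((k:ℕ).factorial : ℝ) * ((j:ℕ).choose (k:ℕ)) * hh ((j:ℕ) - (k:ℕ)))
        = (-1:ℝ)^(i:ℕ) * ∑ k : Fin p, trm (i:ℕ) (j:ℕ) (k:ℕ) := by
      rw [Finset.mul_sum]
      apply Finset.sum_congr rfl
      intro k _
      simp only [trm]
      ring
    rw [this]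
    have := sum_trm_range p (i:ℕ) (j:ℕ) i.isLt
    rw [Fin.sum_univ_eq_sum_range (fun k => trm (i:ℕ) (j:ℕ) k) p, this,
      hermiteH_zero]
  rw [hmul, Matrix.det_mul]
  have hdetB : B.det = (-1:ℝ)^(p.choose 2) := by
    rw [Matrix.det_of_lowerTriangular B]
    · have : ∀ i : Fin p, B i i = (-1:ℝ)^(i:ℕ) := by
        intro i
        simp [hB, hh_zero]
      simp only [this]
      rw [Finset.prod_pow_eq_pow_sum]
      congr 1
      rw [Fin.sum_univ_eq_sum_range (fun i => i) p, Finset.sum_range_id,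
        Nat.choose_two_right]
    · intro i j hij
      have : (i:ℕ) < (j:ℕ) := hij
      have hz : (i:ℕ).choose (j:ℕ) = 0 := Nat.choose_eq_zero_of_lt this
      simp [hB, hz]
  have hdetC : C.det = (-2:ℝ)^(p.choose 2) * ∏ j ∈ Finset.range p, (j.factorial : ℝ) := by
    rw [Matrix.det_of_upperTriangular (M := C)]
    · have : ∀ k : Fin p, C k k = (-2:ℝ)^(k:ℕ) * ((k:ℕ).factorial : ℝ) := by
        intro k
        simp [hC, hh_zero]
      simp only [this]
      rw [Finset.prod_mul_distrib, Finset.prod_pow_eq_pow_sum]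
      congr 1
      · congr 1
        rw [Fin.sum_univ_eq_sum_range (fun i => i) p, Finset.sum_range_id,
          Nat.choose_two_right]
      · rw [Fin.prod_univ_eq_prod_range (fun k => (k.factorial : ℝ)) p]
    · intro k j hkj
      have : (j:ℕ) < (k:ℕ) := hkj
      have hz : (j:ℕ).choose (k:ℕ) = 0 := Nat.choose_eq_zero_of_lt this
      simp [hC, hz]
  rw [hdetB, hdetC, ← mul_assoc, ← mul_pow]
  norm_num
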